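/- arXiv:1710.06556 — 5 statements merged into one kernel-verified Lean document; each statement's English description precedes it below -/
import Mathlib

section
/- For every integer n ≥ 1 and all non-negative integers e_1,…,e_n, the identity L_n^{p^{e_n}} · [e_1,…,e_{n−1}, e_n + n] = Σ_{s=0}^{n−1} (−1)^{n+s−1} · [e_1,…,e_{n−1}, e_n + s] · L_{n,s}^{p^{e_n}} holds in R = 𝔽_p[y_1,…,y_n]. (This is the case k = 0 of Proposition 1.2 of the paper, i.e. its equation (1), cleared of denominators using the relation Q_{n,s} = L_{n,s}/L_n defining the Dickson invariants.) -/
/-- The bracket `[e_1,…,e_m]_I`: the determinant `det (y_{ι a} ^ (p ^ e b))` in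
`𝔽_p[y_1,…,y_n]`, where `ι : Fin m → Fin n` enumerates the subset `I`. -/
noncomputable def bracket (p n m : ℕ) (e : Fin m → ℕ) (ι : Fin m → Fin n) :
    MvPolynomial (Fin n) (ZMod p) :=
  Matrix.det (Matrix.of fun a b : Fin m =>
    (MvPolynomial.X (ι a) : MvPolynomial (Fin n) (ZMod p)) ^ p ^ e b)

/-- `Lpoly p n s = L_{n,s} = [0,1,…,ŝ,…,n]` (for `s < n`); `Lpoly p n n = L_n = [0,…,n-1]`. -/
noncomputable def Lpoly (p n s : ℕ) : MvPolynomial (Fin n) (ZMod p) :=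
  bracket p n n (fun j => if (j : ℕ) < s then (j : ℕ) else (j : ℕ) + 1) id

/-!
Let `V` be the `n × (n+1)` matrix `(y_a ^ p ^ (c + t))` with `c = e_n`. Expanding
`[e_1,…,e_{n−1}, c + s]` along its last column writes it as `(w ᵥ* V) s` for a vector `w`
independent of `s`. Hence the `(n+1) × (n+1)` matrix obtained by putting the row `w ᵥ* V` on top
of `V` has determinant zero, and expanding it along that row gives
`∑ₛ (−1)^s [e_1,…,e_{n−1}, c + s] · det V_ŝ = 0`, where `V_ŝ` is `V` without column `s`.
By Frobenius, `det V_ŝ = L_{n,s}^{p^c}`; isolating the term `s = n` gives the identity.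
-/

open MvPolynomial Matrix

theorem Matrix.sum_neg_one_pow_mul_vecMul_mul_det_submatrix_succAbove_eq_zero {R : Type*}
    [CommRing R] {m : ℕ} (V : Matrix (Fin m) (Fin (m + 1)) R) (w : Fin m → R) :
    ∑ s : Fin (m + 1), (-1) ^ (s : ℕ) * (w ᵥ* V) s * (V.submatrix id s.succAbove).det = 0 := by
  set A : Matrix (Fin (m + 1)) (Fin (m + 1)) R := of (vecCons (w ᵥ* V) V)
  have hrow : A 0 = ∑ k, vecCons 0 w k • A k := by
    ext t
    simp only [A, of_apply, Finset.sum_apply, Pi.smul_apply, smul_eq_mul, Fin.sum_univ_succ,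
      cons_val_zero, cons_val_succ, zero_mul, zero_add]
    rfl
  have hA : A.det = 0 := by
    simpa [← hrow] using det_updateRow_sum A 0 (vecCons 0 w)
  rw [← hA, det_succ_row_zero]
  rfl

theorem Fin.val_succAbove_eq_ite {n : ℕ} (s : Fin (n + 1)) (j : Fin n) :
    (s.succAbove j : ℕ) = if (j : ℕ) < s then (j : ℕ) else (j : ℕ) + 1 := by
  unfold Fin.succAbove
  split_ifs <;> simp_all [Fin.lt_def]

section Bracket

variable {p n : ℕ}

noncomputable def powMatrix (p n : ℕ) {m : ℕ} (e : Fin m → ℕ) :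
    Matrix (Fin n) (Fin m) (MvPolynomial (Fin n) (ZMod p)) :=
  of fun a b => X a ^ p ^ e b

theorem bracket_pow_prime_pow [Fact p.Prime] {m : ℕ} (e : Fin m → ℕ) (ι : Fin m → Fin n)
    (k : ℕ) : bracket p n m e ι ^ p ^ k = bracket p n m (fun b => e b + k) ι := by
  rw [bracket, ← iterateFrobenius_def, RingHom.map_det, bracket]
  congr 1
  ext a b
  simp [iterateFrobenius_def, ← pow_mul, ← pow_add]

theorem bracket_update_eq_sum_adjugate (e : Fin n → ℕ) (i : Fin n) (k : ℕ) :
    bracket p n n (Function.update e i k) id =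
      ∑ a, (powMatrix p n e).adjugate i a * X a ^ p ^ k := by
  have hcol : bracket p n n (Function.update e i k) id =
      ((powMatrix p n e).updateCol i fun a => X a ^ p ^ k).det := by
    rw [bracket]
    congr 1
    ext a b
    by_cases hb : b = i
    · subst hb
      simp
    · simp [powMatrix, hb]
  rw [hcol, ← cramer_apply, cramer_eq_adjugate_mulVec]
  rfl

theorem Lpoly_pow_eq_det_submatrix [Fact p.Prime] (c : ℕ) (s : Fin (n + 1)) :
    Lpoly p n s ^ p ^ c =
      ((powMatrix p n fun t : Fin (n + 1) => c + t).submatrix id s.succAbove).det := by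
  rw [Lpoly, bracket_pow_prime_pow]
  congr 1
  ext a
  simp [Fin.val_succAbove_eq_ite, add_comm]

theorem sum_neg_one_pow_mul_bracket_update_mul_Lpoly_pow_eq_zero [Fact p.Prime] (e : Fin n → ℕ)
    (i : Fin n) (c : ℕ) :
    ∑ s : Fin (n + 1), (-1) ^ (s : ℕ) * bracket p n n (Function.update e i (c + s)) id *
      Lpoly p n s ^ p ^ c = 0 := by
  rw [← sum_neg_one_pow_mul_vecMul_mul_det_submatrix_succAbove_eq_zero
    (powMatrix p n fun t : Fin (n + 1) => c + t) ((powMatrix p n e).adjugate i)]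
  refine Finset.sum_congr rfl fun s _ => ?_
  rw [bracket_update_eq_sum_adjugate, Lpoly_pow_eq_det_submatrix]
  rfl

end Bracket

/-- Case `k = 0` of Proposition 1.2:
`L_n^{p^{e_n}} · [e_1,…,e_{n−1}, e_n + n]
  = Σ_{s=0}^{n−1} (−1)^{n+s−1} · [e_1,…,e_{n−1}, e_n + s] · L_{n,s}^{p^{e_n}}`. -/
theorem statement0 (p : ℕ) (hp : p.Prime) (n : ℕ) (hn : 1 ≤ n)
    (e : Fin n → ℕ) :
    Lpoly p n n ^ p ^ e ⟨n - 1, by omega⟩ *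
        bracket p n n
          (Function.update e ⟨n - 1, by omega⟩ (e ⟨n - 1, by omega⟩ + n)) id =
      ∑ s ∈ Finset.range n,
        (-1 : MvPolynomial (Fin n) (ZMod p)) ^ (n + s - 1) *
          bracket p n n
            (Function.update e ⟨n - 1, by omega⟩ (e ⟨n - 1, by omega⟩ + s)) id *
          Lpoly p n s ^ p ^ e ⟨n - 1, by omega⟩ := by
  have : Fact p.Prime := ⟨hp⟩
  set i : Fin n := ⟨n - 1, by omega⟩
  set term : ℕ → MvPolynomial (Fin n) (ZMod p) := fun s =>
    bracket p n n (Function.update e i (e i + s)) id * Lpoly p n s ^ p ^ e i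
  have hsum : ∑ s ∈ Finset.range n, (-1) ^ s * term s + (-1) ^ n * term n = 0 := by
    have h := sum_neg_one_pow_mul_bracket_update_mul_Lpoly_pow_eq_zero (p := p) e i (e i)
    rw [Fin.sum_univ_castSucc] at h
    simp only [Fin.val_castSucc, Fin.val_last, mul_assoc] at h
    rw [← Fin.sum_univ_eq_sum_range]
    exact h
  have hsign : ∀ s, (-1 : MvPolynomial (Fin n) (ZMod p)) ^ (n + s - 1) =
      -(-1) ^ n * (-1) ^ s := by
    intro s
    have h : (-1 : MvPolynomial (Fin n) (ZMod p)) ^ (n + s - 1) * -1 = (-1) ^ n * (-1) ^ s := by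
      rw [← pow_succ, Nat.sub_add_cancel (by omega), pow_add]
    linear_combination -h
  have hsq : ((-1 : MvPolynomial (Fin n) (ZMod p)) ^ n) ^ 2 = 1 := by
    rw [← pow_mul, mul_comm, pow_mul, neg_one_sq, one_pow]
  simp only [hsign, mul_assoc, ← Finset.mul_sum]
  linear_combination (-1) ^ n * hsum - term n * hsq
end

section
/- For every integer n ≥ 2 and all non-negative integers e_1,…,e_n, writing K := {1,…,n−1}, the identity ([0,1,…,n−2]_K)^{p^{e_n}} · [e_1,…,e_{n−1}, e_n + n − 1] = Σ_{s=0}^{n−2} (−1)^{n+s} · [e_1,…,e_{n−1}, e_n + s] · ([0,…,ŝ,…,n−1]_K)^{p^{e_n}} + [e_1,…,e_{n−1}]_K · L_n^{p^{e_n}} holds in R = 𝔽_p[y_1,…,y_n]. (This is equation (2) of the paper, cleared of denominators using Q_{n−1,s} = [0,…,ŝ,…,n−1]_K/[0,…,n−2]_K and V_n = L_n/[0,…,n−2]_K.) -/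
open Matrix MvPolynomial

namespace Matrix

variable {R : Type*} [CommRing R]

theorem sum_det_updateCol_last_mul_det_submatrix {m : ℕ}
    (A B : Matrix (Fin (m + 1)) (Fin (m + 1)) R) :
    ∑ s : Fin (m + 1), (-1) ^ (m + s : ℕ) * (B.updateCol (Fin.last m) (fun i => A i s)).det *
        (A.submatrix Fin.castSucc s.succAbove).det =
      A.det * (B.submatrix Fin.castSucc Fin.castSucc).det := by
  have hcol : ∀ s, (B.updateCol (Fin.last m) (fun i => A i s)).det =
      (B.adjugate * A) (Fin.last m) s := by
    intro s
    rw [← cramer_apply, cramer_eq_adjugate_mulVec]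
    rfl
  calc _ = ∑ s, (B.adjugate * A) (Fin.last m) s * A.adjugate s (Fin.last m) := by
        refine Finset.sum_congr rfl fun s _ => ?_
        rw [hcol, adjugate_fin_succ_eq_det_submatrix, Fin.succAbove_last, Fin.val_last]
        ring
    _ = (B.adjugate * (A * A.adjugate)) (Fin.last m) (Fin.last m) := by
        rw [← Matrix.mul_assoc, mul_apply]
    _ = _ := by
        rw [mul_adjugate, Matrix.mul_smul, Matrix.mul_one, smul_apply, smul_eq_mul,
          adjugate_fin_succ_eq_det_submatrix, Fin.succAbove_last, Fin.val_last, ← two_mul,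
          pow_mul, neg_one_sq, one_pow, one_mul]

theorem det_pow_eq_det_map_pow (p : ℕ) [ExpChar R p] (k : ℕ) {ι : Type*} [DecidableEq ι]
    [Fintype ι] (M : Matrix ι ι R) :
    M.det ^ p ^ k = (M.map (· ^ p ^ k)).det :=
  (iterateFrobenius R p k).map_det M

end Matrix

section Bracket

variable {p n m : ℕ}

noncomputable def bracketMatrix (p n m : ℕ) (e : Fin m → ℕ) (ι : Fin m → Fin n) :
    Matrix (Fin m) (Fin m) (MvPolynomial (Fin n) (ZMod p)) :=
  of fun a b => X (ι a) ^ p ^ e b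

theorem bracket_eq_det (e : Fin m → ℕ) (ι : Fin m → Fin n) :
    bracket p n m e ι = (bracketMatrix p n m e ι).det :=
  rfl

theorem submatrix_bracketMatrix {l : ℕ} (e : Fin m → ℕ) (ι : Fin m → Fin n)
    (f g : Fin l → Fin m) :
    (bracketMatrix p n m e ι).submatrix f g = bracketMatrix p n l (e ∘ g) (ι ∘ f) :=
  rfl

theorem updateCol_bracketMatrix (e : Fin m → ℕ) (ι : Fin m → Fin n) (j : Fin m) (c : ℕ) :
    (bracketMatrix p n m e ι).updateCol j (fun a => X (ι a) ^ p ^ c) =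
      bracketMatrix p n m (Function.update e j c) ι := by
  ext a b
  by_cases hb : b = j
  · subst hb
    simp [bracketMatrix]
  · simp [bracketMatrix, hb]

theorem bracket_pow (hp : p.Prime) (e : Fin m → ℕ) (ι : Fin m → Fin n) (k : ℕ) :
    bracket p n m e ι ^ p ^ k = bracket p n m (fun j => k + e j) ι := by
  have : Fact p.Prime := ⟨hp⟩
  rw [bracket_eq_det, det_pow_eq_det_map_pow p k]
  congr 1
  ext a b
  simp only [bracketMatrix, map_apply, of_apply, ← pow_mul, pow_add, mul_comm]

end Bracket

theorem bracket_update_last_expansion {p : ℕ} (hp : p.Prime) (m : ℕ) (e : Fin (m + 1) → ℕ) :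
    bracket p (m + 1) m (fun j => (j : ℕ)) Fin.castSucc ^ p ^ e (Fin.last m) *
        bracket p (m + 1) (m + 1) (Function.update e (Fin.last m) (e (Fin.last m) + m)) id =
      (∑ s ∈ Finset.range m,
        (-1 : MvPolynomial (Fin (m + 1)) (ZMod p)) ^ (m + 1 + s) *
          bracket p (m + 1) (m + 1) (Function.update e (Fin.last m) (e (Fin.last m) + s)) id *
          bracket p (m + 1) m (fun j => if (j : ℕ) < s then (j : ℕ) else (j : ℕ) + 1)
              Fin.castSucc ^ p ^ e (Fin.last m)) +
        bracket p (m + 1) m (fun j => e (Fin.castSucc j)) Fin.castSucc *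
          Lpoly p (m + 1) (m + 1) ^ p ^ e (Fin.last m) := by
  set k := e (Fin.last m)
  set A := bracketMatrix p (m + 1) (m + 1) (fun t => k + t) id
  set B := bracketMatrix p (m + 1) (m + 1) e id
  have hcol : ∀ t : Fin (m + 1), (B.updateCol (Fin.last m) fun i => A i t).det =
      bracket p (m + 1) (m + 1) (Function.update e (Fin.last m) (k + t)) id := fun t => by
    rw [bracket_eq_det, ← updateCol_bracketMatrix]
    rfl
  have hminor : ∀ s : Fin (m + 1), (A.submatrix Fin.castSucc s.succAbove).det =
      bracket p (m + 1) m (fun j => if (j : ℕ) < s then (j : ℕ) else (j : ℕ) + 1)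
        Fin.castSucc ^ p ^ k := fun s => by
    rw [bracket_pow hp, submatrix_bracketMatrix, bracket_eq_det]
    congr 2
    funext j
    simp only [Function.comp_apply, Fin.succAbove, Fin.lt_def, Fin.val_castSucc]
    split_ifs <;> rfl
  have hL : A.det = Lpoly p (m + 1) (m + 1) ^ p ^ k := by
    rw [Lpoly, bracket_pow hp, bracket_eq_det]
    simp only [Fin.is_lt, if_true, A]
  have hB : (B.submatrix Fin.castSucc Fin.castSucc).det =
      bracket p (m + 1) m (fun j => e j.castSucc) Fin.castSucc :=
    rfl
  have hsign : ∀ s : ℕ, (-1 : MvPolynomial (Fin (m + 1)) (ZMod p)) ^ (m + 1 + s) =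
      -(-1) ^ (m + s) := fun s => by
    rw [add_right_comm, pow_succ, mul_neg_one]
  have key := sum_det_updateCol_last_mul_det_submatrix A B
  rw [Fin.sum_univ_castSucc] at key
  simp only [hcol, hminor, hL, hB, Fin.val_castSucc, Fin.val_last, Fin.is_lt, if_true] at key
  rw [Even.neg_one_pow ⟨m, rfl⟩, one_mul] at key
  rw [Finset.sum_range]
  simp only [hsign, neg_mul, Finset.sum_neg_distrib]
  linear_combination key

/-- Equation (2) of the paper, cleared of denominators.  Here `K = {1,…,n−1}` is the
set of the first `n−1` variables, realized by the embedding `Fin.castLE : Fin (n-1) → Fin n`: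
`([0,…,n−2]_K)^{p^{e_n}} · [e_1,…,e_{n−1}, e_n + n − 1]
  = Σ_{s=0}^{n−2} (−1)^{n+s} · [e_1,…,e_{n−1}, e_n + s] · ([0,…,ŝ,…,n−1]_K)^{p^{e_n}}
    + [e_1,…,e_{n−1}]_K · L_n^{p^{e_n}}`. -/
theorem statement1 (p : ℕ) (hp : p.Prime) (n : ℕ) (hn : 2 ≤ n)
    (e : Fin n → ℕ) :
    bracket p n (n - 1) (fun j => (j : ℕ)) (Fin.castLE (by omega)) ^
          p ^ e ⟨n - 1, by omega⟩ *
        bracket p n n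
          (Function.update e ⟨n - 1, by omega⟩ (e ⟨n - 1, by omega⟩ + (n - 1))) id =
      (∑ s ∈ Finset.range (n - 1),
        (-1 : MvPolynomial (Fin n) (ZMod p)) ^ (n + s) *
          bracket p n n
            (Function.update e ⟨n - 1, by omega⟩ (e ⟨n - 1, by omega⟩ + s)) id *
          bracket p n (n - 1) (fun j => if (j : ℕ) < s then (j : ℕ) else (j : ℕ) + 1)
              (Fin.castLE (by omega)) ^ p ^ e ⟨n - 1, by omega⟩) +
        bracket p n (n - 1) (fun j => e (Fin.castLE (by omega) j)) (Fin.castLE (by omega)) *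
          Lpoly p n n ^ p ^ e ⟨n - 1, by omega⟩ := by
  obtain ⟨m, rfl⟩ : ∃ m, n = m + 1 := ⟨n - 1, by omega⟩
  exact bracket_update_last_expansion hp m e
end

section
/- (Proposition 1.2 of the paper, cleared of denominators.) For every integer n ≥ 1, every k with 0 ≤ k ≤ n−1, and all non-negative integers e_{k+1},…,e_n, the identity L_n^{p^{e_n}} · [k; e_{k+1},…,e_{n−1}, e_n + n] = Σ_{s=0}^{n−1} (−1)^{n+s−1} · [k; e_{k+1},…,e_{n−1}, e_n + s] · L_{n,s}^{p^{e_n}} holds in the exterior algebra A over R, where elements of R act as scalars. -/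
set_option synthInstance.maxHeartbeats 1000000
set_option maxHeartbeats 1000000

/-- The exterior algebra `A` over `R = 𝔽_p[y_1,…,y_n]` on the free module `R^n`. -/
noncomputable abbrev ExtAlg (p n : ℕ) :=
  ExteriorAlgebra (MvPolynomial (Fin n) (ZMod p)) (Fin n → MvPolynomial (Fin n) (ZMod p))

/-- The generator `x_i` of the exterior algebra. -/
noncomputable def xgen (p n : ℕ) (i : Fin n) : ExtAlg p n :=
  ExteriorAlgebra.ι (MvPolynomial (Fin n) (ZMod p)) (Pi.single i 1)

/-- The Mùi bracket `[k; e_{k+1},…,e_n] = Σ_I sign(σ_I) · x_I · [e_{k+1},…,e_n]_{I'}`,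
the sum running over all `k`-element subsets `I` of `{1,…,n}` with complement `I'`;
`σ_I` is the permutation sending `(1,…,n)` to `(i_1,…,i_k,i_{k+1},…,i_n)` where
`I = {i_1 < … < i_k}` and `I' = {i_{k+1} < … < i_n}`. -/
noncomputable def muiBracket (p n k : ℕ) (e : Fin (n - k) → ℕ) : ExtAlg p n :=
  ∑ I : Finset (Fin n),
    if hI : I.card = k then
      have hk : k ≤ n := by
        have h1 := Finset.card_le_univ I
        rw [hI, Fintype.card_fin] at h1
        exact h1
      have hIc : Iᶜ.card = n - k := by
        simp [Finset.card_compl, hI]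
      ((Equiv.Perm.sign
        ((finCongr (Nat.add_sub_cancel' hk).symm).trans
          (finSumFinEquiv.symm.trans
            ((Equiv.sumCongr (I.orderIsoOfFin hI).toEquiv
              ((Iᶜ.orderIsoOfFin hIc).toEquiv.trans
                (Equiv.subtypeEquivRight fun x => Finset.mem_compl))).trans
              (Equiv.sumCompl (· ∈ I)))))) : ℤ) •
      ((List.ofFn fun a : Fin k => xgen p n ((I.orderIsoOfFin hI) a)).prod *
        algebraMap (MvPolynomial (Fin n) (ZMod p)) (ExtAlg p n)
          (bracket p n (n - k) e fun b => ((Iᶜ.orderIsoOfFin hIc) b : Fin n)))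
    else 0

/-!
Fix `j` and `E`. The `(n+1) × (n+1)` matrix `(y_a ^ p ^ (E + b))` with rows `y_1, …, y_n, y_j` has
a repeated row, so its Laplace expansion along the last row vanishes. Its minors are the
`L_{n,s} ^ p ^ E`, since the Frobenius `r ↦ r ^ p ^ E` commutes with `det`; this gives
`y_j ^ p ^ (E + n) · L_n ^ p ^ E = Σ_{s<n} (-1)^{n+s-1} L_{n,s} ^ p ^ E · y_j ^ p ^ (E + s)`
for every `j`. The same linear relation then holds between columns of any bracket `[…]_I`, hence,
by multilinearity of the determinant, between brackets differing in one exponent, and finally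
between Mùi brackets, whose coefficients `sign(σ_I) x_I` commute with the scalars `R`.
-/

open Matrix MvPolynomial

namespace Matrix

variable {S : Type*} [CommRing S]

theorem det_updateCol_sum_smul {m ι : Type*} [DecidableEq m] [Fintype m] (M : Matrix m m S)
    (t : m) (s : Finset ι) (w : ι → S) (v : ι → m → S) :
    (M.updateCol t (∑ i ∈ s, w i • v i)).det = ∑ i ∈ s, w i * (M.updateCol t (v i)).det := by
  classical
  induction s using Finset.induction_on with
  | empty => exact det_eq_zero_of_column_eq_zero t fun a => by simp
  | insert i s hi ih =>
    rw [Finset.sum_insert hi, Finset.sum_insert hi, det_updateCol_add, det_updateCol_smul, ih]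

/-- The Laplace expansion along the last row of `A` with its row `j` appended, a singular matrix. -/
theorem sum_neg_one_pow_mul_det_submatrix_succAbove_eq_zero {n : ℕ}
    (A : Matrix (Fin n) (Fin (n + 1)) S) (j : Fin n) :
    ∑ b : Fin (n + 1), (-1) ^ (n + b : ℕ) * A j b * (A.submatrix id b.succAbove).det = 0 := by
  let B : Matrix (Fin (n + 1)) (Fin (n + 1)) S := of fun a => Fin.lastCases (A j) (fun i => A i) a
  have hrow : ∀ a, B (Fin.castSucc a) = A a := fun a => by ext; simp [B]
  have hlast : B (Fin.last n) = A j := by ext; simp [B]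
  have hB : B.det = 0 := det_zero_of_row_eq (Fin.castSucc_lt_last j).ne (by rw [hrow, hlast])
  rw [det_succ_row B (Fin.last n)] at hB
  simpa [Fin.succAbove_last, hrow, hlast, submatrix] using hB

end Matrix

section Brackets

variable {p n m : ℕ}

theorem Lpoly_pow_eq_det (hp : p.Prime) (E : ℕ) (s : Fin (n + 1)) :
    Lpoly p n s ^ p ^ E =
      (of fun a b : Fin n =>
        (X a : MvPolynomial (Fin n) (ZMod p)) ^ p ^ (E + s.succAbove b)).det := by
  have := Fact.mk hp
  rw [Lpoly, bracket, ← iterateFrobenius_def, RingHom.map_det]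
  congr 1
  refine Matrix.ext fun a b => ?_
  simp only [RingHom.mapMatrix_apply, map_apply, of_apply, iterateFrobenius_def, ← pow_mul,
    ← pow_add, id]
  rw [add_comm E]
  unfold Fin.succAbove
  split_ifs <;> simp [Fin.lt_def] at * <;> omega

theorem X_pow_mul_Lpoly_pow (hp : p.Prime) (j : Fin n) (E : ℕ) :
    (X j : MvPolynomial (Fin n) (ZMod p)) ^ p ^ (E + n) * Lpoly p n n ^ p ^ E =
      ∑ s ∈ Finset.range n, (-1) ^ (n + s - 1) * Lpoly p n s ^ p ^ E * X j ^ p ^ (E + s) := by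
  have h := sum_neg_one_pow_mul_det_submatrix_succAbove_eq_zero
    (of fun (a : Fin n) (b : Fin (n + 1)) => (X a : MvPolynomial (Fin n) (ZMod p)) ^ p ^ (E + b)) j
  simp only [submatrix, of_apply, id, ← Lpoly_pow_eq_det hp, Fin.sum_univ_castSucc,
    Fin.val_castSucc] at h
  rw [Fin.sum_univ_eq_sum_range
    (fun s => (-1) ^ (n + s) * X j ^ p ^ (E + s) * Lpoly p n s ^ p ^ E), Fin.val_last,
    (Even.add_self n).neg_one_pow, one_mul] at h
  have hsign : ∀ s ∈ Finset.range n,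
      (-1 : MvPolynomial (Fin n) (ZMod p)) ^ (n + s - 1) * Lpoly p n s ^ p ^ E * X j ^ p ^ (E + s)
        = -((-1) ^ (n + s) * X j ^ p ^ (E + s) * Lpoly p n s ^ p ^ E) := by
    intro s hs
    obtain ⟨m, hm⟩ : ∃ m, n + s = m + 1 := ⟨n + s - 1, by simp at hs; omega⟩
    rw [hm, Nat.add_sub_cancel, pow_succ]
    ring
  rw [Finset.sum_congr rfl hsign, Finset.sum_neg_distrib]
  linear_combination h

theorem bracket_update (e : Fin m → ℕ) (ι : Fin m → Fin n) (t : Fin m) (E : ℕ) :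
    bracket p n m (Function.update e t E) ι =
      ((of fun a b => (X (ι a) : MvPolynomial (Fin n) (ZMod p)) ^ p ^ e b).updateCol t
        fun a => X (ι a) ^ p ^ E).det := by
  rw [bracket]
  congr 1
  refine Matrix.ext fun a b => ?_
  rcases eq_or_ne b t with rfl | hb <;> simp [*]

theorem Lpoly_pow_mul_bracket_update (hp : p.Prime) (e : Fin m → ℕ) (ι : Fin m → Fin n)
    (t : Fin m) :
    Lpoly p n n ^ p ^ e t * bracket p n m (Function.update e t (e t + n)) ι =
      ∑ s ∈ Finset.range n, (-1) ^ (n + s - 1) * Lpoly p n s ^ p ^ e t *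
        bracket p n m (Function.update e t (e t + s)) ι := by
  have hcol : Lpoly p n n ^ p ^ e t •
        (fun a => (X (ι a) : MvPolynomial (Fin n) (ZMod p)) ^ p ^ (e t + n)) =
      ∑ s ∈ Finset.range n, ((-1) ^ (n + s - 1) * Lpoly p n s ^ p ^ e t) •
        fun a => (X (ι a) : MvPolynomial (Fin n) (ZMod p)) ^ p ^ (e t + s) := by
    ext a : 1
    simpa [mul_comm] using X_pow_mul_Lpoly_pow hp (ι a) (e t)
  simp only [bracket_update, ← det_updateCol_smul, hcol, det_updateCol_sum_smul]

theorem algebraMap_mul_muiBracket {k : ℕ} {ι : Type*} (c : MvPolynomial (Fin n) (ZMod p))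
    (s : Finset ι) (w : ι → MvPolynomial (Fin n) (ZMod p)) (e₀ : Fin (n - k) → ℕ)
    (e : ι → Fin (n - k) → ℕ)
    (h : ∀ ι', c * bracket p n (n - k) e₀ ι' = ∑ i ∈ s, w i * bracket p n (n - k) (e i) ι') :
    algebraMap _ (ExtAlg p n) c * muiBracket p n k e₀ =
      ∑ i ∈ s, algebraMap _ (ExtAlg p n) (w i) * muiBracket p n k (e i) := by
  simp only [muiBracket, Finset.mul_sum]
  rw [Finset.sum_comm]
  refine Finset.sum_congr rfl fun I _ => ?_
  split_ifs with hI
  · rw [mul_smul_comm, ← Algebra.left_comm, ← map_mul, h, map_sum, Finset.mul_sum,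
      Finset.smul_sum]
    refine Finset.sum_congr rfl fun i _ => ?_
    rw [map_mul, Algebra.left_comm, mul_smul_comm]
  · simp

end Brackets
/-- Proposition 1.2 of the paper, cleared of denominators: for `0 ≤ k ≤ n−1`,
`L_n^{p^{e_n}} · [k; e_{k+1},…,e_{n−1}, e_n + n]
  = Σ_{s=0}^{n−1} (−1)^{n+s−1} · [k; e_{k+1},…,e_{n−1}, e_n + s] · L_{n,s}^{p^{e_n}}`
in the exterior algebra `A`, where elements of `R` act as scalars via `algebraMap`. -/
theorem statement2 (p n k : ℕ) (hp : p.Prime) (hn : 1 ≤ n)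
    (hk : k ≤ n - 1) (e : Fin (n - k) → ℕ) :
    algebraMap (MvPolynomial (Fin n) (ZMod p)) (ExtAlg p n)
          (Lpoly p n n ^ p ^ e ⟨n - k - 1, by omega⟩) *
        muiBracket p n k
          (Function.update e ⟨n - k - 1, by omega⟩ (e ⟨n - k - 1, by omega⟩ + n)) =
      ∑ s ∈ Finset.range n,
        (-1 : ExtAlg p n) ^ (n + s - 1) *
          muiBracket p n k
            (Function.update e ⟨n - k - 1, by omega⟩ (e ⟨n - k - 1, by omega⟩ + s)) *
          algebraMap (MvPolynomial (Fin n) (ZMod p)) (ExtAlg p n)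
            (Lpoly p n s ^ p ^ e ⟨n - k - 1, by omega⟩) := by
  set t : Fin (n - k) := ⟨n - k - 1, by omega⟩
  rw [algebraMap_mul_muiBracket _ _ _ _ _ (Lpoly_pow_mul_bracket_update hp e · t)]
  refine Finset.sum_congr rfl fun s _ => ?_
  rw [map_mul, map_pow, map_neg, map_one, mul_assoc, mul_assoc, Algebra.commutes]
end

section
/- (The computation of μ(q) in the proof of Theorem 1.1 of the paper.) Let p be an odd prime, h := (p−1)/2, and for a non-negative integer q define μ(q) := (−1)^{h·q(q−1)/2} · (h!)^q as an element of 𝔽_p = ZMod p. Then for all non-negative integers k, m and a_1,…,a_m, if q = k + 2(p^{a_1} + p^{a_2} + … + p^{a_m}), then μ(q) = (−1)^m · μ(k) in 𝔽_p. -/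
/-- `μ(q) = (−1)^{h·q(q−1)/2} · (h!)^q ∈ 𝔽_p`, where `h = (p−1)/2`. -/
def mu (p q : ℕ) : ZMod p :=
  (-1) ^ ((p - 1) / 2 * (q * (q - 1) / 2)) * (Nat.factorial ((p - 1) / 2) : ZMod p) ^ q

/-! By Wilson's theorem, `-1 = (p - 1)! = h! · (p - 1)⋯(p - h) ≡ (-1)^h (h!)^2`, so
`(h!)^2 = (-1)^(h + 1)`. Together with `C(k + 2, 2) = C(k, 2) + 2k + 1` this gives
`μ(k + 2) = -μ(k)`; finally the summands `p^{a_i}` are odd, so `(-1)^{Σ p^{a_i}} = (-1)^m`. -/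

open Nat

theorem ZMod.half_factorial_sq {p : ℕ} [Fact p.Prime] (hodd : Odd p) :
    (((p - 1) / 2)! : ZMod p) ^ 2 = (-1) ^ ((p - 1) / 2 + 1) := by
  set h := (p - 1) / 2
  have hsub : p - 1 - h = h := by obtain ⟨t, ht⟩ := hodd; omega
  have hfact : h ! * (p - 1).descFactorial h = (p - 1)! := by
    simpa only [hsub] using Nat.factorial_mul_descFactorial (Nat.sub_le (p - 1) h)
  have hwilson : (h ! : ZMod p) * ((-1) ^ h * h !) = -1 := by
    rw [← ZMod.cast_descFactorial (by omega), ← Nat.cast_mul, hfact, ZMod.wilsons_lemma]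
  calc (h ! : ZMod p) ^ 2 = ((-1 : ZMod p) ^ h) ^ 2 * (h ! : ZMod p) ^ 2 := by
        rw [← pow_mul, Even.neg_one_pow ⟨h, by ring⟩, one_mul]
    _ = (-1) ^ h * ((h ! : ZMod p) * ((-1) ^ h * h !)) := by ring
    _ = (-1) ^ (h + 1) := by rw [hwilson, pow_succ]

theorem Nat.add_two_choose_two (k : ℕ) : (k + 2).choose 2 = k.choose 2 + (2 * k + 1) := by
  rw [Nat.choose_succ_succ (k + 1) 1, Nat.choose_succ_succ k 1, Nat.choose_one_right,
    Nat.choose_one_right]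
  ring

theorem mu_add_two {p : ℕ} [Fact p.Prime] (hodd : Odd p) (k : ℕ) : mu p (k + 2) = -mu p k := by
  set h := (p - 1) / 2
  have hexp : h * ((k + 2) * (k + 2 - 1) / 2) + (h + 1) =
      h * (k * (k - 1) / 2) + 2 * (h * k + h) + 1 := by
    rw [← Nat.choose_two_right, ← Nat.choose_two_right, Nat.add_two_choose_two]; ring
  calc mu p (k + 2)
      = (-1) ^ (h * ((k + 2) * (k + 2 - 1) / 2) + (h + 1)) * (h ! : ZMod p) ^ k := by
        rw [mu, pow_add _ k 2, ZMod.half_factorial_sq hodd, pow_add]; ring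
    _ = -mu p k := by
        rw [hexp, mu, pow_succ, pow_add, pow_mul (-1 : ZMod p) 2, neg_one_sq, one_pow]; ring

theorem mu_add_two_mul {p : ℕ} [Fact p.Prime] (hodd : Odd p) (k s : ℕ) :
    mu p (k + 2 * s) = (-1) ^ s * mu p k := by
  induction s with
  | zero => simp
  | succ s ih => rw [Nat.mul_succ, ← add_assoc, mu_add_two hodd, ih, pow_succ]; ring

theorem neg_one_pow_sum_odd {R ι : Type*} [CommMonoid R] [HasDistribNeg R] (s : Finset ι)
    (f : ι → ℕ) (hf : ∀ i ∈ s, Odd (f i)) : (-1 : R) ^ (∑ i ∈ s, f i) = (-1) ^ s.card := by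
  rw [← Finset.prod_pow_eq_pow_sum, Finset.prod_congr rfl fun i hi => (hf i hi).neg_one_pow,
    Finset.prod_const]

/-- The computation of `μ(q)` in the proof of Theorem 1.1: if
`q = k + 2(p^{a_1} + … + p^{a_m})` then `μ(q) = (−1)^m · μ(k)` in `𝔽_p`. -/
theorem statement6 (p : ℕ) (hp : p.Prime) (hodd : Odd p) (k m : ℕ) (a : Fin m → ℕ)
    (q : ℕ) (hq : q = k + 2 * ∑ i, p ^ a i) :
    mu p q = (-1) ^ m * mu p k := by
  have : Fact p.Prime := ⟨hp⟩
  rw [hq, mu_add_two_mul hodd, neg_one_pow_sum_odd _ _ fun i _ => hodd.pow, Finset.card_univ,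
    Fintype.card_fin]
end

section
/- (The sign identity used in the proof of Proposition 4.3 of the paper.) Let n ≥ 1, let 1 ≤ s_1 < … < s_k ≤ n−1 with 0 ≤ k ≤ n−1, set s_0 := 0, and let 0 ≤ t ≤ k. Let h_1 < … < h_{n−k−1} be the increasing enumeration of {1,…,n−1} ∖ {s_1,…,s_k}. Then in the exterior algebra A over R one has [k; h_1,…,h_{n−k−1}, s_t] = (−1)^{n−1−k+s_t−t} · M_{n, s_0,…,ŝ_t,…,s_k}, where the Mùi bracket on the left has the n−k exponents h_1,…,h_{n−k−1}, s_t in that (not necessarily increasing) order, and M_{n,s_0,…,ŝ_t,…,s_k} is the Mùi invariant on the k indices s_0,…,s_k with s_t omitted. -/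
set_option synthInstance.maxHeartbeats 1000000
set_option maxHeartbeats 1000000

/-!
The exponent tuple `(h_1, …, h_{n-k-1}, s_t)` is a rearrangement of the increasing tuple `g`:
`g` is `h` with `s_t` inserted at position `r = s_t - t`, since exactly `s_t - t` elements of
`{0, …, n-1} ∖ {s_0, …, s_k}` lie below `s_t`. Moving the last entry to position `r` is a cycle
of sign `(-1)^(n-k-1+r)`, and permuting the exponents permutes the columns of every determinant
`[e]_{I'}` in the Mùi bracket, so the whole bracket picks up that sign.
-/

open Finset Equiv

theorem Fin.insertNth_eq_snoc_comp_perm {α : Type*} {m : ℕ} (r : Fin (m + 1)) (x : α)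
    (f : Fin m → α) :
    Fin.insertNth (α := fun _ ↦ α) r x f =
      Fin.snoc f x ∘ ((Fin.last m).cycleRange⁻¹ * r.cycleRange) := by
  rw [← Fin.cons_comp_cycleRange, ← Fin.insertNth_comp_cycleRange_symm (Fin.last m),
    Fin.insertNth_last']
  rfl

theorem Fin.sign_cycleRange_last_inv_mul {m : ℕ} (r : Fin (m + 1)) :
    Perm.sign ((Fin.last m).cycleRange⁻¹ * r.cycleRange) = (-1) ^ (m + (r : ℕ)) := by
  simp [Fin.sign_cycleRange, pow_add]

theorem dite_lt_pred_eq_snoc_comp_cast {α : Type*} {N : ℕ} (hN : N = N - 1 + 1)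
    (f : Fin (N - 1) → α) (x : α) :
    (fun j : Fin N ↦ if hj : (j : ℕ) < N - 1 then f ⟨j, hj⟩ else x) =
      Fin.snoc f x ∘ Fin.cast hN := by
  funext j
  simp only [Function.comp_apply, Fin.snoc, Fin.val_cast]
  split_ifs <;> rfl

theorem StrictMono.card_filter_image_lt_apply {α : Type*} [LinearOrder α] {N : ℕ}
    {f : Fin N → α} (hf : StrictMono f) (a : Fin N) : #{y ∈ image f univ | y < f a} = a := by
  rw [filter_image, card_image_of_injective _ hf.injective]
  simp_rw [hf.lt_iff_lt, filter_gt_eq_Iio, Fin.card_Iio]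

theorem StrictMono.val_le_apply {N : ℕ} {f : Fin N → ℕ} (hf : StrictMono f) (a : Fin N) :
    (a : ℕ) ≤ f a := by
  calc (a : ℕ) = #{y ∈ image f univ | y < f a} := (hf.card_filter_image_lt_apply a).symm
    _ ≤ #(range (f a)) := card_le_card fun y hy ↦ mem_range.mpr (mem_filter.mp hy).2
    _ = f a := card_range _

theorem StrictMono.exists_eq_insertNth {α : Type*} [LinearOrder α] {m : ℕ}
    {g : Fin (m + 1) → α} {f : Fin m → α} (hg : StrictMono g) (hf : StrictMono f) {x : α}
    (hx : x ∉ Set.range f) (hrange : Set.range g = insert x (Set.range f)) :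
    ∃ r, g = Fin.insertNth (α := fun _ ↦ α) r x f := by
  obtain ⟨r, hr⟩ : x ∈ Set.range g := hrange ▸ Set.mem_insert x _
  have hremove : Fin.removeNth r g = f := by
    refine ((hg.comp (Fin.strictMono_succAbove r)).range_inj hf).mp ?_
    rw [Set.range_comp, Fin.range_succAbove, Set.compl_eq_univ_sdiff,
      Set.image_sdiff hg.injective, Set.image_univ, Set.image_singleton, hr, hrange,
      Set.insert_sdiff_self_of_notMem hx]
  exact ⟨r, by rw [← hr, ← hremove, Fin.insertNth_self_removeNth]⟩

theorem bracket_comp_perm (p n : ℕ) {m : ℕ} (e : Fin m → ℕ) (σ : Perm (Fin m))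
    (ι : Fin m → Fin n) : bracket p n m (e ∘ σ) ι = Perm.sign σ • bracket p n m e ι := by
  rw [bracket, bracket, Units.smul_def, zsmul_eq_mul, ← Matrix.det_permute']
  rfl

theorem muiBracket_comp_perm (p n k : ℕ) (e : Fin (n - k) → ℕ) (σ : Perm (Fin (n - k))) :
    muiBracket p n k (e ∘ σ) = Perm.sign σ • muiBracket p n k e := by
  simp only [muiBracket, smul_sum, bracket_comp_perm]
  refine sum_congr rfl fun I _ ↦ ?_
  split_ifs
  · rw [Units.smul_def, Units.smul_def, map_zsmul, mul_smul_comm, smul_comm]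
  · rw [smul_zero]

section MuiExponents

variable {n k : ℕ} {s : Fin (k + 1) → ℕ}

theorem Icc_sdiff_image_succ_eq_range_sdiff (hs0 : s 0 = 0) (hn : 1 ≤ n) :
    Icc 1 (n - 1) \ image (fun j : Fin k ↦ s j.succ) univ = range n \ image s univ := by
  ext y
  simp only [mem_sdiff, mem_Icc, mem_range, mem_image, mem_univ, true_and, Fin.exists_fin_succ,
    hs0]
  by_cases hy : ∃ j : Fin k, s j.succ = y <;> simp [hy]
  omega

theorem range_sdiff_image_succAbove (hs : Function.Injective s) (t : Fin (k + 1))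
    (hst : s t < n) :
    range n \ image (fun j : Fin k ↦ s (t.succAbove j)) univ =
      insert (s t) (range n \ image s univ) := by
  ext y
  simp only [mem_sdiff, mem_insert, mem_range, mem_image, mem_univ, true_and]
  by_cases hy : y = s t
  · simp [hy, hst, hs.eq_iff]
  · simp [hy, Fin.forall_iff_succAbove t, Ne.symm hy]

theorem card_filter_range_sdiff_image_lt (hs : StrictMono s) (t : Fin (k + 1)) (hst : s t ≤ n) :
    #{y ∈ range n \ image s univ | y < s t} = s t - t := by
  have hfilter : {y ∈ range n \ image s univ | y < s t} = range (s t) \ image s univ := by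
    ext y
    simp only [mem_filter, mem_sdiff, mem_range]
    have : y < s t → y < n := by omega
    tauto
  have hinter : image s univ ∩ range (s t) = {y ∈ image s univ | y < s t} := by
    ext y
    simp only [mem_inter, mem_filter, mem_range]
  rw [hfilter, card_sdiff, card_range, hinter, hs.card_filter_image_lt_apply]

theorem exists_eq_insertNth_of_image_eq {m : ℕ} (hs : StrictMono s) (t : Fin (k + 1))
    (hst : s t ≤ n) {f : Fin m → ℕ} {g : Fin (m + 1) → ℕ} (hf : StrictMono f)
    (hg : StrictMono g) (hf_img : image f univ = range n \ image s univ)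
    (hg_img : image g univ = insert (s t) (image f univ)) :
    ∃ r : Fin (m + 1), (r : ℕ) = s t - t ∧ g = Fin.insertNth (α := fun _ ↦ ℕ) r (s t) f := by
  have hst_notMem : s t ∉ Set.range f := by
    rw [← Fintype.coe_image_univ, hf_img]
    simp
  obtain ⟨r, hr⟩ := hg.exists_eq_insertNth hf hst_notMem (by
    rw [← Fintype.coe_image_univ, hg_img, coe_insert, Fintype.coe_image_univ])
  refine ⟨r, ?_, hr⟩
  have hgr : g r = s t := by rw [hr, Fin.insertNth_apply_same]
  rw [← hg.card_filter_image_lt_apply r, hgr, hg_img, filter_insert, if_neg (lt_irrefl _),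
    hf_img, card_filter_range_sdiff_image_lt hs t hst]

end MuiExponents

theorem statement7_general (p n k : ℕ) (hn : 1 ≤ n)
    (hk : k ≤ n - 1) (s : Fin (k + 1) → ℕ) (hs0 : s 0 = 0) (hs : StrictMono s)
    (hsn : ∀ i, s i ≤ n - 1) (t : Fin (k + 1))
    (h : Fin (n - k - 1) → ℕ) (hh : StrictMono h)
    (hhim : Finset.image h Finset.univ =
      Finset.Icc 1 (n - 1) \ Finset.image (fun j : Fin k => s j.succ) Finset.univ)
    (g : Fin (n - k) → ℕ) (hg : StrictMono g)
    (hgim : Finset.image g Finset.univ =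
      Finset.range n \ Finset.image (fun j : Fin k => s (t.succAbove j)) Finset.univ) :
    muiBracket p n k
        (fun j : Fin (n - k) =>
          if hj : (j : ℕ) < n - k - 1 then h ⟨(j : ℕ), hj⟩ else s t) =
      (-1 : ExtAlg p n) ^ (n - 1 - k + s t - (t : ℕ)) * muiBracket p n k g := by
  have hN : n - k = n - k - 1 + 1 := by omega
  have hst : s t < n := by have := hsn t; omega
  have himg_h : image h univ = range n \ image s univ :=
    hhim.trans (Icc_sdiff_image_succ_eq_range_sdiff hs0 hn)
  set c := Fin.castOrderIso hN
  have himg : image (g ∘ c.symm) univ = insert (s t) (image h univ) := by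
    rw [image_comp, image_univ_of_surjective c.symm.surjective, hgim,
      range_sdiff_image_succAbove hs.injective t hst, himg_h]
  obtain ⟨r, hr_val, hr⟩ :=
    exists_eq_insertNth_of_image_eq hs t hst.le hh (hg.comp c.symm.strictMono) himg_h himg
  have hperm : g = (fun j : Fin (n - k) ↦ if hj : (j : ℕ) < n - k - 1 then h ⟨j, hj⟩ else s t) ∘
      c.toEquiv.symm.permCongr ((Fin.last _).cycleRange⁻¹ * r.cycleRange) := by
    rw [dite_lt_pred_eq_snoc_comp_cast hN]
    funext j
    simpa [c] using congrFun (hr.trans (Fin.insertNth_eq_snoc_comp_perm r (s t) h)) (c j)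
  rw [hperm, muiBracket_comp_perm, Perm.sign_permCongr, Fin.sign_cycleRange_last_inv_mul,
    Units.smul_def, zsmul_eq_mul, ← mul_assoc]
  have hts := hs.val_le_apply t
  have heven : Even (n - 1 - k + s t - t + (n - k - 1 + r)) := ⟨n - k - 1 + (s t - t), by omega⟩
  push_cast
  rw [← pow_add, heven.neg_one_pow, one_mul]

/-- The sign identity used in the proof of Proposition 4.3.  Let
`0 = s_0 < s_1 < … < s_k ≤ n−1` (so `s : Fin (k+1) → ℕ` with `s 0 = 0`), let
`0 ≤ t ≤ k`, let `h_1 < … < h_{n−k−1}` enumerate `{1,…,n−1} ∖ {s_1,…,s_k}`, and let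
`g_1 < … < g_{n−k}` enumerate `{0,…,n−1} ∖ {s_0,…,ŝ_t,…,s_k}` (so that the Mùi
invariant `M_{n,s_0,…,ŝ_t,…,s_k}` is the Mùi bracket `[k; g]`).  Then
`[k; h_1,…,h_{n−k−1}, s_t] = (−1)^{n−1−k+s_t−t} · M_{n,s_0,…,ŝ_t,…,s_k}`. -/
theorem statement7 (p n k : ℕ) (hp : p.Prime) (hodd : Odd p) (hn : 1 ≤ n)
    (hk : k ≤ n - 1) (s : Fin (k + 1) → ℕ) (hs0 : s 0 = 0) (hs : StrictMono s)
    (hsn : ∀ i, s i ≤ n - 1) (t : Fin (k + 1))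
    (h : Fin (n - k - 1) → ℕ) (hh : StrictMono h)
    (hhim : Finset.image h Finset.univ =
      Finset.Icc 1 (n - 1) \ Finset.image (fun j : Fin k => s j.succ) Finset.univ)
    (g : Fin (n - k) → ℕ) (hg : StrictMono g)
    (hgim : Finset.image g Finset.univ =
      Finset.range n \ Finset.image (fun j : Fin k => s (t.succAbove j)) Finset.univ) :
    muiBracket p n k
        (fun j : Fin (n - k) =>
          if hj : (j : ℕ) < n - k - 1 then h ⟨(j : ℕ), hj⟩ else s t) =
      (-1 : ExtAlg p n) ^ (n - 1 - k + s t - (t : ℕ)) * muiBracket p n k g :=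
  statement7_general p n k hn hk s hs0 hs hsn t h hh hhim g hg hgim
end
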